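/- arXiv:1910.12307 — 2 statements merged into one kernel-verified Lean document; each statement's English description precedes it below -/
import Mathlib

section
/- A diagonalizable per-Hermitian matrix A ∈ M_{2n}(ℂ) with no real eigenvalues is perplectically diagonalizable, i.e. there exists a perplectic matrix P (PᴴR_{2n}P = R_{2n}) such that P⁻¹AP is diagonal. -/
open Matrix

/-- The `n × n` reversal (anti-identity) matrix. -/
def Rrev (n : ℕ) : Matrix (Fin n) (Fin n) ℂ :=
  Matrix.of fun i j => if j = i.rev then 1 else 0

/-- The `2n × 2n` reversal (anti-identity) matrix, in block form. -/
def R2 (n : ℕ) : Matrix (Fin n ⊕ Fin n) (Fin n ⊕ Fin n) ℂ :=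
  Matrix.fromBlocks 0 (Rrev n) (Rrev n) 0

/-!
Write `A Q = Q D` with `D = diagonal d`. Per-Hermiticity makes the Hermitian form `M = Qᴴ R Q`
intertwine `D` with its conjugate, so `M` only pairs an eigenvalue `λ` with `conj λ`. As no
eigenvalue is real, `M` vanishes between eigenvectors from the same half-plane; invertibility of
`M` then forces `n` eigenvalues into each half-plane, and after ordering them
`M = [[0, E], [Eᴴ, 0]]`. Replacing the second block of columns `Q₂` by `Q₂ E⁻¹ Rₙ` turns the form
into `R₂ₙ` and keeps the columns eigenvectors, because `E` intertwines the two diagonal blocks.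
-/

namespace Matrix

variable {K ι : Type*} [Fintype ι] [DecidableEq ι]

theorem card_le_card_compl_of_isUnit_det [Field K] {M : Matrix ι ι K} (hM : IsUnit M.det)
    (p : ι → Prop) [DecidablePred p] (h : ∀ i j, p i → p j → M i j = 0) :
    Fintype.card {i // p i} ≤ Fintype.card {i // ¬ p i} := by
  have hrows : LinearIndependent K (fun i : {i // p i} => M i) :=
    (linearIndependent_rows_of_isUnit ((isUnit_iff_isUnit_det M).mpr hM)).comp _
      Subtype.val_injective
  -- the rows indexed by `p` are supported on the columns indexed by `¬ p`
  have hsupp : (fun i : {i // p i} => M i) = Function.ExtendByZero.linearMap K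
      (Subtype.val : {j // ¬ p j} → ι) ∘ fun (i : {i // p i}) (j : {j // ¬ p j}) => M i j := by
    ext i k
    by_cases hk : p k
    · have hk' : ¬ ∃ j : {j // ¬ p j}, j.1 = k := fun ⟨j, hj⟩ => j.2 (hj ▸ hk)
      simp [h i k i.2 hk, Function.extend_apply' _ _ _ hk']
    · exact (Subtype.val_injective.extend_apply (fun j : {j // ¬ p j} => M i j) 0 ⟨k, hk⟩).symm
  have := (LinearIndependent.of_comp _ (hsupp ▸ hrows)).fintype_card_le_finrank
  rwa [Module.finrank_fintype_fun_eq_card] at this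

theorem eq_of_diagonal_mul_eq_mul_diagonal [CommRing K] [NoZeroDivisors K] {M : Matrix ι ι K}
    {f g : ι → K} (h : diagonal f * M = M * diagonal g) {i j : ι} (hij : M i j ≠ 0) :
    f i = g j := by
  have := congr_fun₂ h i j
  rw [diagonal_mul, mul_diagonal, mul_comm] at this
  exact mul_left_cancel₀ hij this

theorem diagonal_star_mul_gram [CommRing K] [StarRing K] {A R Q : Matrix ι ι K} {d : ι → K}
    (hAR : Aᴴ * R = R * A) (hAQ : A * Q = Q * diagonal d) :
    diagonal (star d) * (Qᴴ * R * Q) = Qᴴ * R * Q * diagonal d := by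
  have hQA : Qᴴ * Aᴴ = diagonal (star d) * Qᴴ := by
    rw [← conjTranspose_mul, hAQ, conjTranspose_mul, diagonal_conjTranspose]
  calc diagonal (star d) * (Qᴴ * R * Q) = diagonal (star d) * Qᴴ * R * Q := by
        simp only [Matrix.mul_assoc]
    _ = Qᴴ * R * (A * Q) := by rw [← hQA, Matrix.mul_assoc Qᴴ, hAR]; simp only [Matrix.mul_assoc]
    _ = Qᴴ * R * Q * diagonal d := by rw [hAQ]; simp only [Matrix.mul_assoc]

theorem isUnit_det_gram [CommRing K] [StarRing K] {R Q : Matrix ι ι K} (hR : IsUnit R.det)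
    (hQ : IsUnit Q.det) : IsUnit (Qᴴ * R * Q).det := by
  rw [det_mul, det_mul, det_conjTranspose]
  exact (hQ.star.mul hR).mul hQ

theorem exists_equiv_sum_of_isUnit_det [Field K] {n : ℕ} (hι : Fintype.card ι = n + n)
    {M : Matrix ι ι K} (hM : IsUnit M.det) (p : ι → Prop) [DecidablePred p]
    (h : ∀ i j, (p i ↔ p j) → M i j = 0) :
    ∃ π : Fin n ⊕ Fin n ≃ ι, ∀ a, p (π (.inl a)) ∧ ¬ p (π (.inr a)) := by
  have h₁ := card_le_card_compl_of_isUnit_det hM p fun i j hi hj => h i j (iff_of_true hi hj)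
  have h₂ := card_le_card_compl_of_isUnit_det hM (¬ p ·) fun i j hi hj => h i j (iff_of_false hi hj)
  have hnn : Fintype.card {i // ¬ ¬ p i} = Fintype.card {i // p i} :=
    Fintype.card_congr (Equiv.subtypeEquivRight fun _ => not_not)
  have hsum := Fintype.card_subtype_compl p
  have hle := Fintype.card_subtype_le p
  have hp : Fintype.card {i // p i} = n := by omega
  have hnp : Fintype.card {i // ¬ p i} = n := by omega
  let e₁ := (Fintype.equivFinOfCardEq hp).symm
  let e₂ := (Fintype.equivFinOfCardEq hnp).symm
  exact ⟨(Equiv.sumCongr e₁ e₂).trans (Equiv.sumCompl p), fun a => ⟨(e₁ a).2, (e₂ a).2⟩⟩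

theorem eq_fromBlocks_zero_zero_of_isHermitian {m α : Type*} [Star α] [Zero α]
    {M : Matrix (m ⊕ m) (m ⊕ m) α} (hM : M.IsHermitian) (h₁ : M.toBlocks₁₁ = 0)
    (h₂ : M.toBlocks₂₂ = 0) : M = fromBlocks 0 M.toBlocks₁₂ M.toBlocks₁₂ᴴ 0 := by
  have h₂₁ : M.toBlocks₂₁ = M.toBlocks₁₂ᴴ := by
    ext a b
    exact (hM.apply _ _).symm
  conv_lhs => rw [← fromBlocks_toBlocks M]
  rw [h₁, h₂, h₂₁]

theorem isUnit_det_of_isUnit_det_fromBlocks_zero_zero [CommRing K] {m : Type*} [Fintype m]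
    [DecidableEq m] {B C : Matrix m m K} (h : IsUnit (fromBlocks 0 B C 0).det) : IsUnit B.det := by
  have hfactor : fromBlocks 0 B C 0 = fromBlocks 0 1 1 0 * fromBlocks C 0 0 B := by
    simp [fromBlocks_multiply]
  rw [hfactor, det_mul, det_fromBlocks_zero₁₂, IsUnit.mul_iff, IsUnit.mul_iff] at h
  exact h.2.2

theorem inv_mul_mul_eq_diagonal [CommRing K] {A P : Matrix ι ι K} {d : ι → K}
    (hP : IsUnit P.det) (hAP : A * P = P * diagonal d) : P⁻¹ * A * P = diagonal d := by
  rw [Matrix.mul_assoc, hAP, nonsing_inv_mul_cancel_left P (diagonal d) hP]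

theorem mem_spectrum_of_mul_eq_mul_diagonal [Field K] {A P : Matrix ι ι K} {d : ι → K}
    (hP : IsUnit P.det) (hAP : A * P = P * diagonal d) (i : ι) : d i ∈ spectrum K A := by
  have hconj : spectrum K (P⁻¹ * A * P) = spectrum K A :=
    spectrum.units_conjugate' (u := nonsingInvUnit P hP)
  rw [← hconj, inv_mul_mul_eq_diagonal hP hAP, spectrum_diagonal]
  exact ⟨i, rfl⟩

theorem mul_submatrix_eq_of_mul_eq_mul_diagonal [CommRing K] {κ : Type*} [Fintype κ]
    [DecidableEq κ] {A Q : Matrix ι ι K} {d : ι → K} (hAQ : A * Q = Q * diagonal d)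
    (π : κ ≃ ι) : A * Q.submatrix id π = Q.submatrix id π * diagonal (d ∘ π) := by
  rw [← submatrix_diagonal_equiv, submatrix_mul_equiv, ← hAQ, submatrix_mul A Q id id π
    Function.bijective_id, submatrix_id_id]

end Matrix

lemma Rrev_mul_apply {n : ℕ} (X : Matrix (Fin n) (Fin n) ℂ) (i j : Fin n) :
    (Rrev n * X) i j = X i.rev j := by
  simp [Rrev, mul_apply]

lemma mul_Rrev_apply {n : ℕ} (X : Matrix (Fin n) (Fin n) ℂ) (i j : Fin n) :
    (X * Rrev n) i j = X i j.rev := by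
  simp [Rrev, mul_apply, eq_comm (a := j), Fin.rev_eq_iff]

lemma Rrev_mul_Rrev (n : ℕ) : Rrev n * Rrev n = 1 := by
  ext i j
  rw [Rrev_mul_apply]
  simp [Rrev, one_apply, eq_comm]

lemma conjTranspose_Rrev (n : ℕ) : (Rrev n)ᴴ = Rrev n := by
  ext i j
  simp [Rrev, apply_ite, Fin.rev_eq_iff, eq_comm (a := j)]

lemma diagonal_mul_Rrev {n : ℕ} (v : Fin n → ℂ) :
    diagonal v * Rrev n = Rrev n * diagonal (fun i => v i.rev) := by
  ext i j
  rw [mul_Rrev_apply, Rrev_mul_apply]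
  simp [diagonal_apply, Fin.rev_eq_iff]

lemma R2_mul_R2 (n : ℕ) : R2 n * R2 n = 1 := by
  simp [R2, fromBlocks_multiply, Rrev_mul_Rrev, fromBlocks_one]

lemma isHermitian_R2 (n : ℕ) : (R2 n).IsHermitian := by
  simp [IsHermitian, R2, fromBlocks_conjTranspose, conjTranspose_Rrev]

lemma conjTranspose_mul_R2 {n : ℕ} {A : Matrix (Fin n ⊕ Fin n) (Fin n ⊕ Fin n) ℂ}
    (hA : R2 n * Aᴴ * R2 n = A) : Aᴴ * R2 n = R2 n * A := by
  calc Aᴴ * R2 n = R2 n * (R2 n * Aᴴ * R2 n) := by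
        simp only [← Matrix.mul_assoc, R2_mul_R2, Matrix.one_mul]
    _ = R2 n * A := by rw [hA]

lemma isUnit_det_R2 (n : ℕ) : IsUnit (R2 n).det :=
  isUnit_det_of_right_inverse (R2_mul_R2 n)

/-- `Qᴴ R Q` only pairs the eigenvalue `λ` with `conj λ`, which lies in the opposite half-plane. -/
lemma gram_apply_eq_zero_of_im_pos_iff {ι : Type*} [Fintype ι] [DecidableEq ι]
    {A R Q : Matrix ι ι ℂ} {d : ι → ℂ} (hAR : Aᴴ * R = R * A) (hAQ : A * Q = Q * diagonal d)
    (hd : ∀ i, (d i).im ≠ 0) {i j : ι} (hij : 0 < (d i).im ↔ 0 < (d j).im) :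
    (Qᴴ * R * Q) i j = 0 := by
  by_contra h
  have hconj := congrArg Complex.im
    (eq_of_diagonal_mul_eq_mul_diagonal (diagonal_star_mul_gram hAR hAQ) h)
  simp only [Pi.star_apply, Complex.star_def, Complex.conj_im] at hconj
  rcases (hd i).lt_or_gt with hi | hi <;> grind

theorem exists_perplectic_of_gram_eq_fromBlocks {n : ℕ}
    {A Q : Matrix (Fin n ⊕ Fin n) (Fin n ⊕ Fin n) ℂ} {E : Matrix (Fin n) (Fin n) ℂ}
    {d₁ d₂ : Fin n → ℂ} (hQ : IsUnit Q.det) (hE : IsUnit E.det)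
    (hgram : Qᴴ * R2 n * Q = fromBlocks 0 E Eᴴ 0) (hAQ : A * Q = Q * diagonal (Sum.elim d₁ d₂))
    (hEd : diagonal (star d₁) * E = E * diagonal d₂) :
    ∃ P, Pᴴ * R2 n * P = R2 n ∧ (P⁻¹ * A * P).IsDiag := by
  set C := E⁻¹ * Rrev n
  set S : Matrix (Fin n ⊕ Fin n) (Fin n ⊕ Fin n) ℂ := fromBlocks 1 0 0 C
  have hEC : E * C = Rrev n := mul_nonsing_inv_cancel_left E (Rrev n) hE
  have hdC : diagonal d₂ * C = C * diagonal (fun a => star (d₁ a.rev)) :=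
    calc diagonal d₂ * C = E⁻¹ * (E * diagonal d₂) * E⁻¹ * Rrev n := by
          rw [nonsing_inv_mul_cancel_left E _ hE]; simp only [C, Matrix.mul_assoc]
      _ = E⁻¹ * (diagonal (star d₁) * Rrev n) := by
          rw [← hEd]; simp only [Matrix.mul_assoc, mul_nonsing_inv_cancel_left E _ hE]
      _ = C * diagonal (fun a => star (d₁ a.rev)) := by
          rw [diagonal_mul_Rrev, ← Matrix.mul_assoc]; rfl
  have hS : IsUnit S.det := by
    rw [det_fromBlocks_zero₂₁, det_one, one_mul, det_mul]
    exact (isUnit_nonsing_inv_det E hE).mul (isUnit_det_of_right_inverse (Rrev_mul_Rrev n))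
  have hAP : A * (Q * S) = Q * S * diagonal (Sum.elim d₁ fun a => star (d₁ a.rev)) := by
    rw [← Matrix.mul_assoc, hAQ, Matrix.mul_assoc, Matrix.mul_assoc, ← fromBlocks_diagonal,
      ← fromBlocks_diagonal, fromBlocks_multiply, fromBlocks_multiply]
    simp only [Matrix.mul_one, Matrix.one_mul, Matrix.mul_zero, Matrix.zero_mul, add_zero,
      zero_add, hdC]
  have hP : IsUnit (Q * S).det := by
    rw [det_mul]
    exact hQ.mul hS
  refine ⟨Q * S, ?_, ?_⟩
  · calc (Q * S)ᴴ * R2 n * (Q * S) = Sᴴ * (Qᴴ * R2 n * Q) * S := by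
          simp only [conjTranspose_mul, Matrix.mul_assoc]
      _ = R2 n := by
          rw [hgram]
          simp [S, R2, fromBlocks_conjTranspose, fromBlocks_multiply, hEC, ← conjTranspose_mul,
            conjTranspose_Rrev]
  · rw [inv_mul_mul_eq_diagonal hP hAP]
    exact isDiag_diagonal _

theorem exists_perplectic_of_im_pos_of_im_neg {n : ℕ}
    {A Q : Matrix (Fin n ⊕ Fin n) (Fin n ⊕ Fin n) ℂ} {d : Fin n ⊕ Fin n → ℂ}
    (hAR : Aᴴ * R2 n = R2 n * A) (hQ : IsUnit Q.det) (hAQ : A * Q = Q * diagonal d)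
    (hpos : ∀ a, 0 < (d (.inl a)).im) (hneg : ∀ a, (d (.inr a)).im < 0) :
    ∃ P, Pᴴ * R2 n * P = R2 n ∧ (P⁻¹ * A * P).IsDiag := by
  set M := Qᴴ * R2 n * Q
  have hd : ∀ i, (d i).im ≠ 0 := Sum.rec (fun a => (hpos a).ne') (fun a => (hneg a).ne)
  have hM : M = fromBlocks 0 M.toBlocks₁₂ M.toBlocks₁₂ᴴ 0 := by
    refine eq_fromBlocks_zero_zero_of_isHermitian
      (isHermitian_conjTranspose_mul_mul Q (isHermitian_R2 n)) ?_ ?_ <;> ext a b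
    · exact gram_apply_eq_zero_of_im_pos_iff hAR hAQ hd (iff_of_true (hpos a) (hpos b))
    · exact gram_apply_eq_zero_of_im_pos_iff hAR hAQ hd
        (iff_of_false (hneg a).not_gt (hneg b).not_gt)
  have hE : IsUnit M.toBlocks₁₂.det := isUnit_det_of_isUnit_det_fromBlocks_zero_zero
    (C := M.toBlocks₁₂ᴴ) (by rw [← hM]; exact isUnit_det_gram (isUnit_det_R2 n) hQ)
  refine exists_perplectic_of_gram_eq_fromBlocks (d₁ := d ∘ .inl) (d₂ := d ∘ .inr) hQ hE hM
    (by rwa [Sum.elim_comp_inl_inr]) ?_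
  ext a b
  simpa [M, toBlocks₁₂, diagonal_mul, mul_diagonal] using
    congr_fun₂ (diagonal_star_mul_gram hAR hAQ) (.inl a) (.inr b)

theorem stmt7 (n : ℕ) (A : Matrix (Fin n ⊕ Fin n) (Fin n ⊕ Fin n) ℂ)
    (hstruct : R2 n * Aᴴ * R2 n = A)
    (hdiag : ∃ Q : Matrix (Fin n ⊕ Fin n) (Fin n ⊕ Fin n) ℂ,
      IsUnit Q.det ∧ (Q⁻¹ * A * Q).IsDiag)
    (hspec : ∀ μ ∈ spectrum ℂ A, μ.im ≠ 0) :
    ∃ P : Matrix (Fin n ⊕ Fin n) (Fin n ⊕ Fin n) ℂ,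
      Pᴴ * R2 n * P = R2 n ∧ (P⁻¹ * A * P).IsDiag := by
  obtain ⟨Q, hQ, hD⟩ := hdiag
  set d := (Q⁻¹ * A * Q).diag
  have hAQ : A * Q = Q * diagonal d := by
    rw [hD.diagonal_diag, Matrix.mul_assoc, mul_nonsing_inv_cancel_left _ _ hQ]
  have hd : ∀ i, (d i).im ≠ 0 := fun i => hspec _ (mem_spectrum_of_mul_eq_mul_diagonal hQ hAQ i)
  have hAR := conjTranspose_mul_R2 hstruct
  obtain ⟨π, hπ⟩ := exists_equiv_sum_of_isUnit_det (n := n) (by simp)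
    (isUnit_det_gram (isUnit_det_R2 n) hQ) (fun i => 0 < (d i).im)
    fun i j => gram_apply_eq_zero_of_im_pos_iff hAR hAQ hd
  have hQπ : IsUnit (Q.submatrix id π).det := by
    rw [det_permute']
    exact ((Equiv.Perm.sign π).isUnit.map (Int.castRingHom ℂ)).mul hQ
  exact exists_perplectic_of_im_pos_of_im_neg hAR hQπ
    (mul_submatrix_eq_of_mul_eq_mul_diagonal hAQ π) (fun a => (hπ a).1)
    fun a => (not_lt.mp (hπ a).2).lt_of_ne (hd _)
end

section
/- Let A = N + N⋆ ∈ M_{2n}(ℂ) where N = VDVᴴ for V ∈ M_{2n×n}(ℂ) with VᴴV = I_n, VᴴJ_{2n}V = 0, D = diag(λ₁,…,λ_n) invertible, and N⋆ = J_{2n}ᵀNᴴJ_{2n}. Choose any square roots λᵢ^{1/2} and set N^{1/2} = V diag(λ₁^{1/2},…,λ_n^{1/2}) Vᴴ. Then (N^{1/2} + (N^{1/2})⋆)² = A, i.e. N^{1/2} + (N^{1/2})⋆ is a normal skew-Hamiltonian square root of A. -/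
open Matrix

/-- The matrix `J_{2n} = [[0, I], [-I, 0]]`. -/
def Jmat (n : ℕ) : Matrix (Fin n ⊕ Fin n) (Fin n ⊕ Fin n) ℂ :=
  Matrix.fromBlocks 0 1 (-1) 0

/-!
Write `M = N^{1/2}` and `M⋆ = Jᵀ Mᴴ J`. Since `M` and `Mᴴ` are both of the form `V X Vᴴ` and the
columns of `V` span a `J`-isotropic subspace (`Vᴴ J V = 0`), every product `P J Q` with
`P, Q ∈ {M, Mᴴ}` vanishes. This kills the cross terms: `(M + M⋆)² = M² + (M²)⋆ = N + N⋆`, and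
`(M + M⋆)ᴴ (M + M⋆) = MᴴM + (MMᴴ)⋆`, which is symmetric in `M ↔ Mᴴ` because `M` is normal.
-/

section Compression

variable {m k R : Type*} [Fintype k] [Semiring R] [StarRing R]

theorem conjTranspose_compression (V : Matrix m k R) (A : Matrix k k R) :
    (V * A * Vᴴ)ᴴ = V * Aᴴ * Vᴴ := by
  simp only [conjTranspose_mul, conjTranspose_conjTranspose, Matrix.mul_assoc]

theorem compression_mul_compression [Fintype m] [DecidableEq k] {V : Matrix m k R}
    (hV : Vᴴ * V = 1) (A B : Matrix k k R) : V * A * Vᴴ * (V * B * Vᴴ) = V * (A * B) * Vᴴ :=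
  calc V * A * Vᴴ * (V * B * Vᴴ) = V * A * (Vᴴ * V) * B * Vᴴ := by simp only [Matrix.mul_assoc]
    _ = V * (A * B) * Vᴴ := by rw [hV, Matrix.mul_one, Matrix.mul_assoc V]

theorem compression_mul_mul_compression [Fintype m] {V : Matrix m k R} {J : Matrix m m R}
    (hV : Vᴴ * J * V = 0) (A B : Matrix k k R) : V * A * Vᴴ * J * (V * B * Vᴴ) = 0 :=
  calc V * A * Vᴴ * J * (V * B * Vᴴ) = V * A * (Vᴴ * J * V) * B * Vᴴ := by
        simp only [Matrix.mul_assoc]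
    _ = 0 := by rw [hV, Matrix.mul_zero, Matrix.zero_mul, Matrix.zero_mul]

end Compression

section SymplecticAdjoint

variable {n : ℕ}

theorem Jmat_transpose : (Jmat n)ᵀ = -Jmat n := by
  simp [Jmat, fromBlocks_transpose, fromBlocks_neg]

theorem Jmat_conjTranspose : (Jmat n)ᴴ = -Jmat n := by
  simp [Jmat, fromBlocks_conjTranspose, fromBlocks_neg]

theorem Jmat_mul_self : Jmat n * Jmat n = -1 := by
  simp [Jmat, fromBlocks_multiply, ← fromBlocks_one, fromBlocks_neg]

def symplecticAdjoint (X : Matrix (Fin n ⊕ Fin n) (Fin n ⊕ Fin n) ℂ) :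
    Matrix (Fin n ⊕ Fin n) (Fin n ⊕ Fin n) ℂ :=
  (Jmat n)ᵀ * Xᴴ * Jmat n

local postfix:max "⋆" => symplecticAdjoint

variable (X Y : Matrix (Fin n ⊕ Fin n) (Fin n ⊕ Fin n) ℂ)

theorem symplecticAdjoint_add : (X + Y)⋆ = X⋆ + Y⋆ := by
  simp only [symplecticAdjoint, conjTranspose_add, Matrix.mul_add, Matrix.add_mul]

theorem symplecticAdjoint_mul : (X * Y)⋆ = Y⋆ * X⋆ := by
  have hJJt : Jmat n * (Jmat n)ᵀ = 1 := by
    rw [Jmat_transpose, Matrix.mul_neg, Jmat_mul_self, neg_neg]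
  calc (X * Y)⋆ = (Jmat n)ᵀ * Yᴴ * (Jmat n * (Jmat n)ᵀ) * Xᴴ * Jmat n := by
        rw [hJJt, Matrix.mul_one, symplecticAdjoint, conjTranspose_mul]
        simp only [Matrix.mul_assoc]
    _ = Y⋆ * X⋆ := by simp only [symplecticAdjoint, Matrix.mul_assoc]

theorem symplecticAdjoint_symplecticAdjoint : X⋆⋆ = X :=
  calc X⋆⋆ = (Jmat n * Jmat n) * X * (Jmat n * Jmat n) := by
        simp only [symplecticAdjoint, Jmat_transpose, conjTranspose_mul, conjTranspose_neg,
          Jmat_conjTranspose, conjTranspose_conjTranspose, neg_neg, Matrix.neg_mul,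
          Matrix.mul_neg, Matrix.mul_assoc]
    _ = X := by
        simp only [Jmat_mul_self, Matrix.neg_mul, Matrix.mul_neg, Matrix.one_mul, Matrix.mul_one,
          neg_neg]

theorem conjTranspose_symplecticAdjoint : (X⋆)ᴴ = Xᴴ⋆ := by
  simp only [symplecticAdjoint, conjTranspose_mul, Jmat_transpose, Jmat_conjTranspose,
    conjTranspose_neg, Matrix.neg_mul, Matrix.mul_neg, neg_neg, Matrix.mul_assoc]

variable {X Y}

theorem mul_symplecticAdjoint_eq_zero (h : X * Jmat n * Yᴴ = 0) : X * Y⋆ = 0 := by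
  rw [symplecticAdjoint, Jmat_transpose, ← Matrix.mul_assoc, ← Matrix.mul_assoc, Matrix.mul_neg,
    Matrix.neg_mul, h, neg_zero, Matrix.zero_mul]

theorem symplecticAdjoint_mul_eq_zero (h : Xᴴ * Jmat n * Y = 0) : X⋆ * Y = 0 := by
  rw [symplecticAdjoint, Matrix.mul_assoc, Matrix.mul_assoc, ← Matrix.mul_assoc Xᴴ, h,
    Matrix.mul_zero]

variable {M : Matrix (Fin n ⊕ Fin n) (Fin n ⊕ Fin n) ℂ}

theorem add_symplecticAdjoint_mul_self (h₁ : M * Jmat n * Mᴴ = 0) (h₂ : Mᴴ * Jmat n * M = 0) :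
    (M + M⋆) * (M + M⋆) = M * M + (M * M)⋆ := by
  rw [add_mul, mul_add, mul_add, mul_symplecticAdjoint_eq_zero h₁,
    symplecticAdjoint_mul_eq_zero h₂, ← symplecticAdjoint_mul, add_zero, zero_add]

theorem add_symplecticAdjoint_normal (hnormal : Mᴴ * M = M * Mᴴ) (h₁ : M * Jmat n * M = 0)
    (h₂ : Mᴴ * Jmat n * Mᴴ = 0) :
    (M + M⋆)ᴴ * (M + M⋆) = (M + M⋆) * (M + M⋆)ᴴ := by
  have hMhJM : (Mᴴ)ᴴ * Jmat n * M = 0 := by rwa [conjTranspose_conjTranspose]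
  have hMJMhh : M * Jmat n * (Mᴴ)ᴴ = 0 := by rwa [conjTranspose_conjTranspose]
  simp only [conjTranspose_add, conjTranspose_symplecticAdjoint, add_mul, mul_add]
  rw [mul_symplecticAdjoint_eq_zero h₂, mul_symplecticAdjoint_eq_zero hMJMhh,
    symplecticAdjoint_mul_eq_zero hMhJM, symplecticAdjoint_mul_eq_zero h₂,
    ← symplecticAdjoint_mul, ← symplecticAdjoint_mul, hnormal]

theorem symplecticAdjoint_add_self : (M + M⋆)⋆ = M + M⋆ := by
  rw [symplecticAdjoint_add, symplecticAdjoint_symplecticAdjoint, add_comm]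

end SymplecticAdjoint

theorem stmt19_general (n : ℕ) (V : Matrix (Fin n ⊕ Fin n) (Fin n) ℂ)
    (d sq : Fin n → ℂ)
    (hV1 : Vᴴ * V = 1) (hV2 : Vᴴ * Jmat n * V = 0)
    (hsq : ∀ i, sq i ^ 2 = d i)
    (N M : Matrix (Fin n ⊕ Fin n) (Fin n ⊕ Fin n) ℂ)
    (hN : N = V * Matrix.diagonal d * Vᴴ)
    (hM : M = V * Matrix.diagonal sq * Vᴴ) :
    (M + (Jmat n)ᵀ * Mᴴ * Jmat n) * (M + (Jmat n)ᵀ * Mᴴ * Jmat n)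
      = N + (Jmat n)ᵀ * Nᴴ * Jmat n ∧
    (M + (Jmat n)ᵀ * Mᴴ * Jmat n)ᴴ * (M + (Jmat n)ᵀ * Mᴴ * Jmat n)
      = (M + (Jmat n)ᵀ * Mᴴ * Jmat n) * (M + (Jmat n)ᵀ * Mᴴ * Jmat n)ᴴ ∧
    (Jmat n)ᵀ * (M + (Jmat n)ᵀ * Mᴴ * Jmat n)ᴴ * Jmat n
      = M + (Jmat n)ᵀ * Mᴴ * Jmat n := by
  have hMh : Mᴴ = V * diagonal (star sq) * Vᴴ := by
    rw [hM, conjTranspose_compression, diagonal_conjTranspose]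
  have isotropic (a b : Fin n → ℂ) : V * diagonal a * Vᴴ * Jmat n * (V * diagonal b * Vᴴ) = 0 :=
    compression_mul_mul_compression hV2 _ _
  have hMM : M * M = N := by
    rw [hM, compression_mul_compression hV1, diagonal_mul_diagonal', hN,
      show (fun i => sq i * sq i) = d from funext fun i => by rw [← hsq, pow_two]]
  have hMnormal : Mᴴ * M = M * Mᴴ := by
    rw [hMh, hM, compression_mul_compression hV1, compression_mul_compression hV1,
      (commute_diagonal _ _).eq]
  refine ⟨?_, ?_, symplecticAdjoint_add_self⟩
  · rw [← hMM]
    exact add_symplecticAdjoint_mul_self (by rw [hMh, hM]; exact isotropic _ _)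
      (by rw [hMh, hM]; exact isotropic _ _)
  · exact add_symplecticAdjoint_normal hMnormal (by rw [hM]; exact isotropic _ _)
      (by rw [hMh]; exact isotropic _ _)

theorem stmt19 (n : ℕ) (V : Matrix (Fin n ⊕ Fin n) (Fin n) ℂ)
    (d sq : Fin n → ℂ)
    (hV1 : Vᴴ * V = 1) (hV2 : Vᴴ * Jmat n * V = 0)
    (hd : ∀ i, d i ≠ 0) (hsq : ∀ i, sq i ^ 2 = d i)
    (N M : Matrix (Fin n ⊕ Fin n) (Fin n ⊕ Fin n) ℂ)
    (hN : N = V * Matrix.diagonal d * Vᴴ)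
    (hM : M = V * Matrix.diagonal sq * Vᴴ) :
    (M + (Jmat n)ᵀ * Mᴴ * Jmat n) * (M + (Jmat n)ᵀ * Mᴴ * Jmat n)
      = N + (Jmat n)ᵀ * Nᴴ * Jmat n ∧
    (M + (Jmat n)ᵀ * Mᴴ * Jmat n)ᴴ * (M + (Jmat n)ᵀ * Mᴴ * Jmat n)
      = (M + (Jmat n)ᵀ * Mᴴ * Jmat n) * (M + (Jmat n)ᵀ * Mᴴ * Jmat n)ᴴ ∧
    (Jmat n)ᵀ * (M + (Jmat n)ᵀ * Mᴴ * Jmat n)ᴴ * Jmat n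
      = M + (Jmat n)ᵀ * Mᴴ * Jmat n :=
  stmt19_general n V d sq hV1 hV2 hsq N M hN hM
end
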